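/- Let γ₁, …, γₙ be closed orbits of a vector field X on ℝ² and let f : ℝ² → ℝ be a continuous function that separates the orbits, i.e., f is constant equal to cᵢ on γᵢ with c₁, …, cₙ pairwise distinct. Then the functions 1, f, f², …, f^{n−1} represent linearly independent elements in the quotient space C^∞(ℝ²)/Im(L), where L(g) = X·g; equivalently, no nontrivial linear combination a₀ + a₁f + ⋯ + a_{n−1}f^{n−1} lies in the image of L. -/

import Mathlib

/-- If `f` is constant with pairwise distinct values `cᵢ` on `n` closed orbits
`γᵢ` of `X`, then `1, f, …, f^{n-1}` are linearly independent modulo the image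
of `L(g) = X·g`: no nontrivial combination `∑ aₖ f^k` equals `X·g`. -/
theorem stmt_10 (n : ℕ) (X : ℝ × ℝ → ℝ × ℝ) (hX : ContDiff ℝ (⊤ : ℕ∞) X)
    (γ : Fin n → ℝ → ℝ × ℝ) (T : Fin n → ℝ) (hT : ∀ i, 0 < T i)
    (hsol : ∀ i t, HasDerivAt (γ i) (X (γ i t)) t)
    (hper : ∀ i t, γ i (t + T i) = γ i t)
    (hnc : ∀ i, ∃ t s, γ i t ≠ γ i s)
    (f : ℝ × ℝ → ℝ) (hf : Continuous f)
    (c : Fin n → ℝ) (hconst : ∀ i t, f (γ i t) = c i)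
    (hdist : Function.Injective c)
    (a : Fin n → ℝ) (g : ℝ × ℝ → ℝ) (hg : ContDiff ℝ (⊤ : ℕ∞) g)
    (him : ∀ p, fderiv ℝ g p (X p) = ∑ k : Fin n, a k * (f p) ^ (k : ℕ)) :
    ∀ k, a k = 0 := by
  -- Value of the combination along orbit i
  set V : Fin n → ℝ := fun i => ∑ k : Fin n, a k * (c i) ^ (k : ℕ) with hV
  -- Step 1: V i = 0 for each i.
  have hVzero : ∀ i, V i = 0 := by
    intro i
    -- h t = g (γ i t) has constant derivative V i
    have hderiv : ∀ t : ℝ, HasDerivAt (fun t => g (γ i t)) (V i) t := by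
      intro t
      have h1 : HasFDerivAt g (fderiv ℝ g (γ i t)) (γ i t) :=
        (hg.differentiable (by simp) (γ i t)).hasFDerivAt
      have h2 := h1.comp_hasDerivAt t (hsol i t)
      have : fderiv ℝ g (γ i t) (X (γ i t)) = V i := by
        rw [him, hV]
        simp [hconst i t]
      rwa [this] at h2
    -- the function t ↦ g (γ i t) - V i * t has zero derivative, hence constant
    have hconst' : ∀ s t : ℝ, g (γ i s) - V i * s = g (γ i t) - V i * t := by
      intro s t
      have hd : ∀ u : ℝ, HasDerivAt (fun u => g (γ i u) - V i * u) 0 u := by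
        intro u
        exact (by simpa using (hderiv u).sub ((hasDerivAt_id u).const_mul (V i)) :
          HasDerivAt ((fun t => g (γ i t)) - fun y => V i * y) 0 u)
      have hdf : Differentiable ℝ (fun u => g (γ i u) - V i * u) :=
        fun u => (hd u).differentiableAt
      have hz : ∀ u, deriv (fun u => g (γ i u) - V i * u) u = 0 :=
        fun u => (hd u).deriv
      exact is_const_of_deriv_eq_zero hdf hz s t
    have := hconst' (0 + T i) 0
    rw [hper i 0] at this
    have hTi : V i * T i = 0 := by linarith
    rcases mul_eq_zero.mp hTi with h | h
    · exact h
    · exact absurd h (ne_of_gt (hT i))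
  -- Step 2: the polynomial ∑ a k X^k vanishes at the n distinct points c i.
  classical
  set P : Polynomial ℝ := ∑ k : Fin n, Polynomial.C (a k) * Polynomial.X ^ (k : ℕ) with hP
  have heval : ∀ i, P.eval (c i) = 0 := by
    intro i
    rw [hP]
    simpa [Polynomial.eval_finset_sum] using hVzero i
  have hdeg : P.natDegree < n ∨ P = 0 := by
    rcases Nat.eq_zero_or_pos n with h0 | hpos
    · right
      rw [hP]
      subst h0
      simp
    · left
      rw [hP]
      refine lt_of_le_of_lt (Polynomial.natDegree_sum_le _ _) ?_
      rw [Finset.fold_max_lt]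
      refine ⟨hpos, ?_⟩
      intro k _
      calc (Polynomial.C (a k) * Polynomial.X ^ (k : ℕ)).natDegree
          ≤ (k : ℕ) :=
            le_trans (Polynomial.natDegree_C_mul_le _ _)
              (le_of_eq (Polynomial.natDegree_X_pow _))
        _ < n := k.isLt
  have hP0 : P = 0 := by
    rcases hdeg with h | h
    · exact P.eq_zero_of_natDegree_lt_card_of_eval_eq_zero hdist heval (by simpa using h)
    · exact h
  -- Step 3: read off coefficients.
  intro k
  have hcoeff : P.coeff (k : ℕ) = a k := by
    rw [hP]
    rw [Polynomial.finset_sum_coeff]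
    simp only [Polynomial.coeff_C_mul, Polynomial.coeff_X_pow]
    rw [Finset.sum_eq_single k]
    · simp
    · intro j _ hjk
      have : (k : ℕ) ≠ (j : ℕ) := fun h => hjk (Fin.ext h.symm)
      simp [this]
    · simp
  rw [← hcoeff, hP0]
  simp
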